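/- arXiv:2104.09382 — 2 statements merged into one kernel-verified Lean document; each statement's English description precedes it below -/
import Mathlib

section
/- Let N ≥ 2, t_i ≥ 0, r_i > 0, v, B > 0, and let w be a feasible allocation with w_i > 0 and Σ w_i ≤ 1. If at an allocation w the finishing times T_i(w) = t_i + v/(w_i B r_i) are not all equal, then w does not minimize T(w) = max_i T_i(w) subject to Σ w_i ≤ 1, w_i > 0; i.e., any minimizer equalizes all finishing times. -/
/-!
If the finishing times are not all equal, some device `k` finishes strictly before the
maximum `M`. By continuity `k` can give up a small share `δ` of its bandwidth and still finish
before `M`; spreading `δ` equally over all devices makes every other device strictly faster,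
so every finishing time drops strictly below `M` while the total bandwidth is unchanged.
-/
open Finset Set Filter Topology

lemma Finset.exists_lt_sup'_of_ne {ι α : Type*} [LinearOrder α] {s : Finset ι} (hs : s.Nonempty)
    {f : ι → α} {i j : ι} (hi : i ∈ s) (hj : j ∈ s) (hij : f i ≠ f j) :
    ∃ k ∈ s, f k < s.sup' hs f := by
  by_contra! h
  exact hij (((le_sup' f hi).antisymm (h i hi)).trans ((le_sup' f hj).antisymm (h j hj)).symm)

lemma exists_pos_lt_of_continuousWithinAt {f : ℝ → ℝ} {x M : ℝ} (hx : 0 < x)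
    (hf : ContinuousWithinAt f (Iio x) x) (hfx : f x < M) : ∃ y, 0 < y ∧ y < x ∧ f y < M := by
  have h := (hf.eventually (gt_mem_nhds hfx)).and (Ioo_mem_nhdsLT hx)
  obtain ⟨y, hy, hy0, hyx⟩ := h.exists
  exact ⟨y, hy0, hyx, hy⟩

theorem exists_reallocation_lt_sup' {ι : Type*} [Fintype ι] [DecidableEq ι]
    (hι : (univ : Finset ι).Nonempty) (T : ι → ℝ → ℝ)
    (hanti : ∀ i, StrictAntiOn (T i) (Ioi 0)) (hcont : ∀ i, ContinuousOn (T i) (Ioi 0))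
    (w : ι → ℝ) (hw : ∀ i, 0 < w i) (hne : ∃ i j, T i (w i) ≠ T j (w j)) :
    ∃ w' : ι → ℝ, (∀ i, 0 < w' i) ∧ ∑ i, w' i = ∑ i, w i ∧
      univ.sup' hι (fun i => T i (w' i)) < univ.sup' hι (fun i => T i (w i)) := by
  obtain ⟨i, j, hij⟩ := hne
  obtain ⟨k, -, hk⟩ :=
    exists_lt_sup'_of_ne hι (f := fun i => T i (w i)) (mem_univ i) (mem_univ j) hij
  obtain ⟨x, hx0, hxk, hTx⟩ := exists_pos_lt_of_continuousWithinAt (hw k)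
    (((hcont k).continuousAt (Ioi_mem_nhds (hw k))).continuousWithinAt) hk
  set δ := w k - x
  have hδ : 0 < δ := sub_pos.mpr hxk
  have hn : (0 : ℝ) < Fintype.card ι := by exact_mod_cast hι.card_pos
  have hshare : 0 < δ / Fintype.card ι := div_pos hδ hn
  set w' : ι → ℝ := fun i => w i + δ / Fintype.card ι - if i = k then δ else 0
  have hxw' : x < w' k := by simp [w', δ, hshare]
  have hw'_pos (i : ι) : 0 < w' i := by
    by_cases hik : i = k
    · subst hik; linarith
    · simp only [w', hik, if_false]; linarith [hw i]
  refine ⟨w', hw'_pos, ?_, ?_⟩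
  · simp only [w', sum_sub_distrib, sum_add_distrib, sum_const, card_univ, nsmul_eq_mul,
      mul_div_cancel₀ _ hn.ne', sum_ite_eq', Finset.mem_univ, if_true, add_sub_cancel_right]
  · rw [sup'_lt_iff]
    intro i _
    by_cases hik : i = k
    · subst hik
      exact ((hanti i) hx0 (hw'_pos i) hxw').trans hTx
    · have : w i < w' i := by simp [w', hik, hshare]
      exact ((hanti i) (hw i) (hw'_pos i) this).trans_le
        (le_sup' (fun i => T i (w i)) (mem_univ i))

lemma finishingTime_strictAntiOn {v B r : ℝ} (t : ℝ) (hv : 0 < v) (hB : 0 < B) (hr : 0 < r) :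
    StrictAntiOn (fun x => t + v / (x * B * r)) (Ioi 0) := by
  intro x hx y hy hxy
  have hx' : 0 < x * B * r := by have := mem_Ioi.mp hx; positivity
  simp only [add_lt_add_iff_left]
  gcongr

lemma finishingTime_continuousOn {B r : ℝ} (t v : ℝ) (hB : 0 < B) (hr : 0 < r) :
    ContinuousOn (fun x => t + v / (x * B * r)) (Ioi 0) := by
  refine continuousOn_const.add (continuousOn_const.div (by fun_prop) fun x hx => ?_)
  have := mem_Ioi.mp hx
  positivity

/-- if the finishing times T_i(w) = t_i + v/(w_i B r_i) are not
all equal at a feasible w, then w does not minimize the maximum finishing time: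
some feasible w' achieves a strictly smaller maximum. -/
theorem stmt_11 (N : ℕ) (hN : 2 ≤ N) (v B : ℝ) (r t : Fin N → ℝ)
    (hv : 0 < v) (hB : 0 < B) (hr : ∀ i, 0 < r i)
    (w : Fin N → ℝ) (hw : ∀ i, 0 < w i) (hsum : ∑ i, w i ≤ 1)
    (hne : ∃ i j, t i + v / (w i * B * r i) ≠ t j + v / (w j * B * r j)) :
    ∃ w' : Fin N → ℝ, (∀ i, 0 < w' i) ∧ (∑ i, w' i) ≤ 1 ∧
      Finset.univ.sup' (Finset.univ_nonempty_iff.mpr ⟨⟨0, by omega⟩⟩)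
          (fun i => t i + v / (w' i * B * r i)) <
      Finset.univ.sup' (Finset.univ_nonempty_iff.mpr ⟨⟨0, by omega⟩⟩)
          (fun i => t i + v / (w i * B * r i)) := by
  obtain ⟨w', hw'_pos, hw'_sum, hlt⟩ := exists_reallocation_lt_sup' _
    (fun i x => t i + v / (x * B * r i))
    (fun i => finishingTime_strictAntiOn (t i) hv hB (hr i))
    (fun i => finishingTime_continuousOn (t i) v hB (hr i)) w hw hne
  exact ⟨w', hw'_pos, hw'_sum ▸ hsum, hlt⟩
end

section
/- Let T* = inf{ T > max_i t_i : Σ_{i=1}^N v/(B r_i (T − t_i)) ≤ 1 }. Then T* is the minimum of max_i (t_i + v/(w_i B r_i)) over all w with w_i > 0 and Σ_i w_i ≤ 1. -/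
/-!
Write `c i = v / (B r i)`. Giving user `i` the share `w i` makes it finish at `t i + c i / w i`,
so a common deadline `T > max t` is met by some allocation exactly when the shares
`c i / (T - t i)` it forces fit into the budget, i.e. `∑ c i / (T - t i) ≤ 1`. These shares, taken
at the smallest feasible `T`, achieve max-latency `T`; conversely any allocation's max-latency is
a feasible deadline. The smallest feasible deadline exists because the feasible set is closed:
the user arriving last forces `T ≥ max t + c j`, away from the pole of the load at `max t`.
-/

open Finset Set

section DeadlineAllocation

variable {ι : Type*} [Fintype ι] {c t : ι → ℝ} {tmax : ℝ}

def feasibleDeadlines (c t : ι → ℝ) (tmax : ℝ) : Set ℝ :=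
  {T | tmax < T ∧ ∑ i, c i / (T - t i) ≤ 1}

lemma feasibleDeadlines_subset_Ici (hc : ∀ i, 0 < c i) (htmax : ∀ i, t i ≤ tmax) {j : ι}
    (hj : t j = tmax) : feasibleDeadlines c t tmax ⊆ Ici (tmax + c j) := by
  rintro T ⟨hT, hload⟩
  have hterm : c j / (T - tmax) ≤ 1 := by
    rw [← hj]
    refine (single_le_sum (fun i _ => ?_) (mem_univ j)).trans hload
    exact div_nonneg (hc i).le (sub_nonneg.2 ((htmax i).trans hT.le))
  rw [div_le_one (sub_pos.2 hT)] at hterm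
  exact show tmax + c j ≤ T by linarith

lemma mem_feasibleDeadlines_of_sum_le [Nonempty ι] (hc : ∀ i, 0 < c i)
    (htmax : ∀ i, t i ≤ tmax) {T : ℝ} (hT : tmax + ∑ i, c i ≤ T) :
    T ∈ feasibleDeadlines c t tmax := by
  have hC : 0 < ∑ i, c i := sum_pos (fun i _ => hc i) univ_nonempty
  refine ⟨by linarith, ?_⟩
  calc ∑ i, c i / (T - t i) ≤ ∑ i, c i / (T - tmax) :=
        sum_le_sum fun i _ => div_le_div_of_nonneg_left (hc i).le (by linarith)
          (by linarith [htmax i])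
    _ = (∑ i, c i) / (T - tmax) := (sum_div _ _ _).symm
    _ ≤ 1 := (div_le_one (by linarith)).2 (by linarith)

lemma isClosed_feasibleDeadlines {a : ℝ} (ha : tmax < a) (htmax : ∀ i, t i ≤ tmax)
    (hsub : feasibleDeadlines c t tmax ⊆ Ici a) : IsClosed (feasibleDeadlines c t tmax) := by
  have hS : feasibleDeadlines c t tmax = Ici a ∩ (fun T => ∑ i, c i / (T - t i)) ⁻¹' Iic 1 := by
    ext T
    refine ⟨fun hT => ⟨hsub hT, hT.2⟩, ?_⟩
    rintro ⟨haT, hload⟩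
    exact ⟨ha.trans_le haT, hload⟩
  rw [hS]
  refine ContinuousOn.preimage_isClosed_of_isClosed ?_ isClosed_Ici isClosed_Iic
  refine continuousOn_finsetSum _ fun i _ =>
    continuousOn_const.div (continuousOn_id.sub continuousOn_const) fun T hT => ?_
  exact (sub_pos.2 ((htmax i).trans_lt (ha.trans_le hT))).ne'

lemma csInf_feasibleDeadlines_mem (hc : ∀ i, 0 < c i) (htmax : ∀ i, t i ≤ tmax) {j : ι}
    (hj : t j = tmax) : sInf (feasibleDeadlines c t tmax) ∈ feasibleDeadlines c t tmax := by
  have : Nonempty ι := ⟨j⟩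
  have hsub := feasibleDeadlines_subset_Ici hc htmax hj
  have hclosed := isClosed_feasibleDeadlines (by linarith [hc j]) htmax hsub
  exact hclosed.csInf_mem ⟨_, mem_feasibleDeadlines_of_sum_le hc htmax le_rfl⟩
    ⟨_, fun _ hT => hsub hT⟩

lemma mem_feasibleDeadlines_of_latency_le (hc : ∀ i, 0 < c i) {j : ι} (hj : t j = tmax) {w : ι → ℝ} (hw : ∀ i, 0 < w i) (hsum : ∑ i, w i ≤ 1) {x : ℝ}
    (hx : ∀ i, t i + c i / w i ≤ x) : x ∈ feasibleDeadlines c t tmax := by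
  have hdelay : ∀ i, c i / w i ≤ x - t i := fun i => by linarith [hx i]
  have hgap : ∀ i, 0 < x - t i := fun i => (div_pos (hc i) (hw i)).trans_le (hdelay i)
  refine ⟨by linarith [hgap j], ?_⟩
  calc ∑ i, c i / (x - t i) ≤ ∑ i, w i :=
        sum_le_sum fun i _ => (div_le_comm₀ (hw i) (hgap i)).1 (hdelay i)
    _ ≤ 1 := hsum

theorem isLeast_csInf_feasibleDeadlines (hne : (univ : Finset ι).Nonempty)
    (hc : ∀ i, 0 < c i) (htmax : ∀ i, t i ≤ tmax) (hmem : ∃ j, t j = tmax) :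
    IsLeast {x : ℝ | ∃ w : ι → ℝ, (∀ i, 0 < w i) ∧ ∑ i, w i ≤ 1 ∧
        x = univ.sup' hne fun i => t i + c i / w i}
      (sInf (feasibleDeadlines c t tmax)) := by
  obtain ⟨j, hj⟩ := hmem
  have hT := csInf_feasibleDeadlines_mem hc htmax hj
  have hgap : ∀ i, 0 < sInf (feasibleDeadlines c t tmax) - t i := fun i =>
    sub_pos.2 ((htmax i).trans_lt hT.1)
  constructor
  · refine ⟨fun i => c i / (sInf (feasibleDeadlines c t tmax) - t i),
      fun i => div_pos (hc i) (hgap i), hT.2, ?_⟩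
    simp only [div_div_cancel₀ (hc _).ne', add_sub_cancel, sup'_const]
  · rintro x ⟨w, hw, hsum, rfl⟩
    have hbdd : BddBelow (feasibleDeadlines c t tmax) :=
      ⟨_, fun _ h => feasibleDeadlines_subset_Ici hc htmax hj h⟩
    exact csInf_le hbdd (mem_feasibleDeadlines_of_latency_le hc hj hw hsum
      fun i => le_sup' (fun i => t i + c i / w i) (mem_univ i))

end DeadlineAllocation

theorem stmt_13_general (N : ℕ) (hN : 0 < N) (v B : ℝ) (r t : Fin N → ℝ)
    (hv : 0 < v) (hB : 0 < B) (hr : ∀ i, 0 < r i)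
    (tmax : ℝ) (htmax : ∀ i, t i ≤ tmax) (hmem : ∃ i, t i = tmax)
    (Tstar : ℝ)
    (hTstar : Tstar =
      sInf {T : ℝ | tmax < T ∧ (∑ i, v / (B * r i * (T - t i))) ≤ 1}) :
    IsLeast {x : ℝ | ∃ w : Fin N → ℝ, (∀ i, 0 < w i) ∧ (∑ i, w i) ≤ 1 ∧
        x = Finset.univ.sup' (Finset.univ_nonempty_iff.mpr ⟨⟨0, hN⟩⟩)
              (fun i => t i + v / (w i * B * r i))}
      Tstar := by
  set c : Fin N → ℝ := fun i => v / (B * r i)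
  have hload : ∀ T i, v / (B * r i * (T - t i)) = c i / (T - t i) := fun T i =>
    (div_div _ _ _).symm
  have hlatency : ∀ s i, v / (s * B * r i) = c i / s := fun s i => by
    rw [div_div, mul_comm (B * r i), ← mul_assoc]
  simp only [hTstar, hload, hlatency]
  exact isLeast_csInf_feasibleDeadlines _ (fun i => div_pos hv (mul_pos hB (hr i))) htmax hmem

/-- T* = inf{T > max_i t_i : Σ v/(B r_i (T − t_i)) ≤ 1} is the
minimum of max_i (t_i + v/(w_i B r_i)) over feasible bandwidth allocations. -/
theorem stmt_13 (N : ℕ) (hN : 0 < N) (v B : ℝ) (r t : Fin N → ℝ)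
    (hv : 0 < v) (hB : 0 < B) (hr : ∀ i, 0 < r i) (ht : ∀ i, 0 ≤ t i)
    (tmax : ℝ) (htmax : ∀ i, t i ≤ tmax) (hmem : ∃ i, t i = tmax)
    (Tstar : ℝ)
    (hTstar : Tstar =
      sInf {T : ℝ | tmax < T ∧ (∑ i, v / (B * r i * (T - t i))) ≤ 1}) :
    IsLeast {x : ℝ | ∃ w : Fin N → ℝ, (∀ i, 0 < w i) ∧ (∑ i, w i) ≤ 1 ∧
        x = Finset.univ.sup' (Finset.univ_nonempty_iff.mpr ⟨⟨0, hN⟩⟩)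
              (fun i => t i + v / (w i * B * r i))}
      Tstar :=
  stmt_13_general N hN v B r t hv hB hr tmax htmax hmem Tstar hTstar
end
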